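/- arXiv:2409.05503 — 3 statements merged into one kernel-verified Lean document; each statement's English description precedes it below -/
import Mathlib

section
/- For any two distinct nodes i ≠ j of a finite simple digraph, the forest matrix entry satisfies ω_ij ≤ 1/(2+d_j), where d_j is the out-degree of j. -/
open Finset

/-- A spanning converging forest of the digraph with edge relation `E`,
encoded by its successor map `f : V → Option V` (`f i = some j` means edge `(i,j)`
is in the forest, `f i = none` means `i` is a root).  Acyclicity is expressed by a
height function that strictly decreases along edges. -/
def IsSCF {V : Type*} (E : V → V → Prop) (f : V → Option V) : Prop :=
  (∀ i j, f i = some j → E i j) ∧ ∃ h : V → ℕ, ∀ i j, f i = some j → h j < h i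

open scoped Classical in
/-- The set `F` of all spanning converging forests of the digraph `E`. -/
noncomputable def forests {V : Type*} [Fintype V] [DecidableEq V]
    (E : V → V → Prop) : Finset (V → Option V) :=
  Finset.univ.filter (IsSCF E)

/-- The root `r_φ(i)` of the tree containing node `i` in the forest `f`:
follow successors until reaching a root. -/
def rootOf {V : Type*} [Fintype V] (f : V → Option V) (i : V) : V :=
  (fun x => (f x).getD x)^[Fintype.card V] i

/-- The combinatorial forest-matrix entry `ω_{ij} = |F_{ij}| / |F|`. -/
noncomputable def fOmega {V : Type*} [Fintype V] [DecidableEq V]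
    (E : V → V → Prop) (i j : V) : ℝ :=
  (((forests E).filter (fun f => rootOf f i = j)).card : ℝ) / ((forests E).card : ℝ)

/-- Expectation of `g` under a uniformly random spanning converging forest. -/
noncomputable def expVal {V : Type*} [Fintype V] [DecidableEq V]
    (E : V → V → Prop) (g : (V → Option V) → ℝ) : ℝ :=
  (∑ f ∈ forests E, g f) / ((forests E).card : ℝ)

/-- Variance of `g` under a uniformly random spanning converging forest. -/
noncomputable def varVal {V : Type*} [Fintype V] [DecidableEq V]
    (E : V → V → Prop) (g : (V → Option V) → ℝ) : ℝ :=
  expVal E (fun f => (g f - expVal E g) ^ 2)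

/-- The indicator estimator `ω̂_{ij}(φ) = 1_{r_φ(i) = j}`. -/
noncomputable def indEst {V : Type*} [Fintype V] [DecidableEq V]
    (i j : V) (f : V → Option V) : ℝ :=
  if rootOf f i = j then 1 else 0

/-- Out-degree `d_i` of node `i`. -/
def outDeg {V : Type*} [Fintype V] (E : V → V → Prop) [DecidableRel E] (i : V) : ℕ :=
  (Finset.univ.filter (fun j => E i j)).card

/-- In-neighbors `N⁻(j)` of node `j`. -/
def inNbrs {V : Type*} [Fintype V] (E : V → V → Prop) [DecidableRel E] (j : V) : Finset V :=
  Finset.univ.filter (fun k => E k j)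

/-- The out-degree Laplacian `L = D - A`. -/
noncomputable def lap {V : Type*} [Fintype V] [DecidableEq V]
    (E : V → V → Prop) [DecidableRel E] : Matrix V V ℝ :=
  Matrix.of fun i j => (if i = j then (outDeg E i : ℝ) else 0) - (if E i j then (1 : ℝ) else 0)

/-- The forest matrix `Ω = (I + L)⁻¹`. -/
noncomputable def forestMatrix {V : Type*} [Fintype V] [DecidableEq V]
    (E : V → V → Prop) [DecidableRel E] : Matrix V V ℝ :=
  (1 + lap E)⁻¹


open Matrix

section Aux

variable {V : Type*} [Fintype V] [DecidableEq V] (E : V → V → Prop) [DecidableRel E]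

/-- Formula for the action of `1 + L`. -/
lemma lapM_mulVec (x : V → ℝ) (a : V) :
    ((1 + lap E) *ᵥ x) a
      = (1 + (outDeg E a : ℝ)) * x a - ∑ k ∈ Finset.univ.filter (fun k => E a k), x k := by
  simp only [Matrix.mulVec, dotProduct, Matrix.add_apply, Matrix.one_apply, lap,
    Matrix.of_apply, sub_mul, add_mul, ite_mul, one_mul, zero_mul]
  rw [Finset.sum_add_distrib, Finset.sum_sub_distrib, Finset.sum_ite_eq, Finset.sum_ite_eq,
    Finset.sum_filter]
  simp [add_mul]
  ring

/-- If `(1+L) x ≥ 0` entrywise then `x ≥ 0` entrywise. -/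
lemma lapM_nonneg_of_mulVec_nonneg {x : V → ℝ}
    (h : ∀ a, 0 ≤ ((1 + lap E) *ᵥ x) a) : ∀ a, 0 ≤ x a := by
  intro a
  obtain ⟨m, -, hm⟩ := Finset.exists_min_image Finset.univ x ⟨a, Finset.mem_univ a⟩
  have hsum : (outDeg E m : ℝ) * x m ≤ ∑ k ∈ Finset.univ.filter (fun k => E m k), x k := by
    have := Finset.card_nsmul_le_sum (Finset.univ.filter (fun k => E m k)) x (x m)
      (fun k _ => hm k (Finset.mem_univ k))
    simpa [outDeg, nsmul_eq_mul] using this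
  have h0 := h m
  rw [lapM_mulVec] at h0
  have hxm : 0 ≤ x m := by nlinarith
  exact le_trans hxm (hm a (Finset.mem_univ a))

lemma lapM_isUnit : IsUnit (1 + lap E) := by
  rw [← Matrix.mulVec_injective_iff_isUnit]
  intro x y hxy
  have hz : (1 + lap E) *ᵥ (x - y) = 0 := by
    rw [Matrix.mulVec_sub, hxy, sub_self]
  have h1 : ∀ a, 0 ≤ (x - y) a :=
    lapM_nonneg_of_mulVec_nonneg E (fun a => by simp [hz])
  have h2 : ∀ a, 0 ≤ (y - x) a := by
    refine lapM_nonneg_of_mulVec_nonneg E (fun a => ?_)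
    have : (1 + lap E) *ᵥ (y - x) = 0 := by
      rw [Matrix.mulVec_sub, hxy, sub_self]
    simp [this]
  funext a
  have := h1 a
  have := h2 a
  simp only [Pi.sub_apply] at *
  linarith

lemma lapM_mul_inv : (1 + lap E) * forestMatrix E = 1 :=
  Matrix.mul_nonsing_inv _ ((Matrix.isUnit_iff_isUnit_det _).mp (lapM_isUnit E))

lemma lapM_inv_mul : forestMatrix E * (1 + lap E) = 1 :=
  Matrix.nonsing_inv_mul _ ((Matrix.isUnit_iff_isUnit_det _).mp (lapM_isUnit E))

lemma forestMatrix_nonneg (a b : V) : 0 ≤ forestMatrix E a b := by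
  have key : ∀ c, 0 ≤ ((1 + lap E) *ᵥ (fun k => forestMatrix E k b)) c := by
    intro c
    have : ((1 + lap E) *ᵥ (fun k => forestMatrix E k b)) c
        = ((1 + lap E) * forestMatrix E) c b := by
      simp [Matrix.mulVec, dotProduct, Matrix.mul_apply]
    rw [this, lapM_mul_inv E, Matrix.one_apply]
    positivity
  exact lapM_nonneg_of_mulVec_nonneg E key a

lemma forestMatrix_row_sum (hE : ∀ i, ¬ E i i) (a : V) :
    ∑ k, forestMatrix E a k = 1 := by
  have hM1 : (1 + lap E) *ᵥ (fun _ => (1 : ℝ)) = fun _ => (1 : ℝ) := by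
    funext c
    rw [lapM_mulVec]
    simp [outDeg]
  have h2 : forestMatrix E *ᵥ (fun _ => (1 : ℝ)) = fun _ => (1 : ℝ) := by
    conv_lhs => rw [← hM1, Matrix.mulVec_mulVec, lapM_inv_mul E, Matrix.one_mulVec]
  have := congrFun h2 a
  simpa [Matrix.mulVec, dotProduct] using this

end Aux

/-- for distinct nodes i ≠ j, the forest matrix entry satisfies
ω_ij ≤ 1/(2+d_j). -/
theorem forestMatrix_offdiag_upper_bound {V : Type*} [Fintype V] [DecidableEq V]
    (E : V → V → Prop) [DecidableRel E] (hE : ∀ i, ¬ E i i)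
    (i j : V) (hij : i ≠ j) :
    forestMatrix E i j ≤ 1 / (2 + (outDeg E j : ℝ)) := by
  have hpos : (0 : ℝ) < 2 + (outDeg E j : ℝ) := by positivity
  have hzero : (forestMatrix E * (1 + lap E)) i j = 0 := by
    rw [lapM_inv_mul E, Matrix.one_apply_ne hij]
  rw [Matrix.mul_apply] at hzero
  have hexp : ∑ k, forestMatrix E i k * (1 + lap E) k j
      = (1 + (outDeg E j : ℝ)) * forestMatrix E i j
        - ∑ k ∈ Finset.univ.filter (fun k => E k j), forestMatrix E i k := by
    simp only [Matrix.add_apply, Matrix.one_apply, lap, Matrix.of_apply, mul_sub, mul_add,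
      mul_ite, mul_one, mul_zero]
    rw [Finset.sum_add_distrib, Finset.sum_sub_distrib]
    rw [Finset.sum_ite_eq', Finset.sum_ite_eq']
    simp [hE j, Finset.sum_filter, mul_comm, mul_add]
    ring
  rw [hexp] at hzero
  have hsub : ∑ k ∈ Finset.univ.filter (fun k => E k j), forestMatrix E i k
      ≤ ∑ k ∈ Finset.univ.erase j, forestMatrix E i k := by
    refine Finset.sum_le_sum_of_subset_of_nonneg ?_ (fun k _ _ => forestMatrix_nonneg E i k)
    intro k hk
    simp only [Finset.mem_filter, Finset.mem_univ, true_and] at hk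
    refine Finset.mem_erase.mpr ⟨?_, Finset.mem_univ k⟩
    intro hkj
    subst hkj
    exact hE k hk
  have herase : ∑ k ∈ Finset.univ.erase j, forestMatrix E i k = 1 - forestMatrix E i j := by
    rw [Finset.sum_erase_eq_sub (Finset.mem_univ j), forestMatrix_row_sum E hE i]
  rw [herase] at hsub
  rw [le_div_iff₀ hpos]
  nlinarith [forestMatrix_nonneg E i j]
end

section
/- For any node i of a finite simple digraph and a uniformly random spanning converging forest φ, the estimator ω̄_ii(φ) = (1/(1+d_i))·(1 + Σ_{k ∈ N⁻(i)} ω̂_ik(φ)) is an unbiased estimator of ω_ii with variance Var(ω̄_ii) = 3ω_ii/(1+d_i) − 2/(1+d_i)² − ω_ii², and this variance is at most the variance ω_ii − ω_ii² of the indicator estimator ω̂_ii. -/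
open Finset

/-!
Let `F` be the set of forests and `Fᵢ ⊆ F` those in which `i` is a root. Deleting the edge
leaving `i` maps `F` onto `Fᵢ`; the fibre over `g` consists of `g` and of `g + (i → j)` for the
out-neighbours `j` of `i` that do not lie below `i` in `g`. The forests `f` whose root `k` is an
in-neighbour of `i` also fibre over `Fᵢ`, via `f ↦ f - (i → j) + (k → i)`, and the fibre over
`g` is in bijection with the out-neighbours `j` that do lie below `i` in `g`: undo the swap by
cutting the last edge of the path from `j` to `i`. Counting both fibrations gives
`|F| + Σ_{k ∈ N⁻(i)} |F_ik| = (1 + dᵢ) |Fᵢ|`, i.e. `(1 + dᵢ) ωᵢᵢ = 1 + Σ_{k ∈ N⁻(i)} ωᵢₖ`.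
Since the events `r_φ(i) = k` are disjoint, `S = Σ_{k ∈ N⁻(i)} ω̂ᵢₖ` is an indicator, so
`E S = E S² = (1 + dᵢ) ωᵢᵢ - 1`, which gives the mean and the variance.
-/

namespace ConvergingForest

open Function Relation

variable {V : Type*}

def step (f : V → Option V) (x : V) : V := (f x).getD x

abbrev Reaches (f : V → Option V) : V → V → Prop := ReflTransGen fun a b => f a = some b

/-- Every vertex reaches a root; for finite `V` this says that `f` has no cycle. -/
def IsAcyclic (f : V → Option V) : Prop := ∀ x, ∃ r, f r = none ∧ Reaches f x r

section Reaches

variable {f : V → Option V} {a b i x y z : V}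

lemma reaches_step_iterate (f : V → Option V) (x : V) (n : ℕ) :
    Reaches f x ((step f)^[n] x) := by
  induction n with
  | zero => exact ReflTransGen.refl
  | succ n ih =>
    rw [iterate_succ_apply']
    cases h : f ((step f)^[n] x) with
    | none => simpa [step, h] using ih
    | some y => simpa [step, h] using ih.tail h

lemma Reaches.exists_step_iterate_eq (h : Reaches f x y) : ∃ n, (step f)^[n] x = y := by
  induction h with
  | refl => exact ⟨0, rfl⟩
  | tail _ hyz ih =>
    obtain ⟨n, rfl⟩ := ih
    exact ⟨n + 1, by rw [iterate_succ_apply', step, hyz]; rfl⟩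

lemma Reaches.eq_of_eq_none (h : Reaches f x y) (hx : f x = none) : y = x := by
  rcases h.cases_head with rfl | ⟨z, hxz, -⟩
  · rfl
  · simp [hx] at hxz

lemma Reaches.total (hy : Reaches f x y) (hz : Reaches f x z) :
    Reaches f y z ∨ Reaches f z y :=
  ReflTransGen.total_of_right_unique
    (fun _ _ _ h₁ h₂ => Option.some_injective _ (h₁.symm.trans h₂)) hy hz

lemma step_iterate_card_eq [Fintype V] (h : Reaches f x y) (hy : f y = none) :
    (step f)^[Fintype.card V] x = y := by
  classical
  have hex := h.exists_step_iterate_eq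
  have hn : (step f)^[Nat.find hex] x = y := Nat.find_spec hex
  have hfix : ∀ m, Nat.find hex ≤ m → (step f)^[m] x = y := by
    intro m hm
    obtain ⟨k, rfl⟩ := Nat.exists_eq_add_of_le hm
    rw [add_comm, iterate_add_apply, hn]
    exact iterate_fixed (by simp [step, hy]) k
  refine hfix _ ?_
  -- by minimality of `Nat.find hex`, the walk visits no vertex twice before reaching `y`
  have hinj : Injective fun m : Fin (Nat.find hex + 1) => (step f)^[m] x := by
    intro a b hab
    by_contra hne
    wlog hlt : (a : ℕ) < b generalizing a b
    · exact this hab.symm (Ne.symm hne) (by omega)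
    have hb : (b : ℕ) ≤ Nat.find hex := Nat.lt_succ_iff.mp b.isLt
    refine Nat.find_min hex (m := Nat.find hex - (b - a)) (by omega) ?_
    calc (step f)^[Nat.find hex - (b - a)] x
        = (step f)^[Nat.find hex - b] ((step f)^[a] x) := by
          rw [← iterate_add_apply]; congr 1; omega
      _ = (step f)^[Nat.find hex - b] ((step f)^[b] x) := congrArg _ hab
      _ = y := by rw [← iterate_add_apply, Nat.sub_add_cancel hb, hn]
  have := Fintype.card_le_of_injective _ hinj
  simp only [Fintype.card_fin] at this
  omega

section Update

variable [DecidableEq V]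

/-- The walk from `x` in `update f a v` follows the walk in `f` until it first meets `a`. -/
lemma Reaches.update_or (h : Reaches f x y) (v : Option V) :
    Reaches (update f a v) x y ∨ Reaches f x a ∧ Reaches (update f a v) x a := by
  induction h with
  | refl => exact Or.inl .refl
  | @tail y z hxy hyz ih =>
    rcases ih with ih | ih
    · by_cases hya : y = a
      · subst hya
        exact Or.inr ⟨hxy, ih⟩
      · exact Or.inl (ih.tail (by rwa [update_of_ne hya]))
    · exact Or.inr ih

lemma Reaches.update_of_not_reaches (h : Reaches f x y) (hxa : ¬ Reaches f x a) (v : Option V) :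
    Reaches (update f a v) x y :=
  (h.update_or v).resolve_right fun h' => hxa h'.1

lemma Reaches.update_self (h : Reaches f x a) (v : Option V) : Reaches (update f a v) x a := by
  rcases h.update_or v with h | ⟨-, h⟩ <;> exact h

lemma not_reaches_update_none (hi : f i = none) (hai : f a = some i) (hxa : Reaches f x a) :
    ¬ Reaches (update f a none) x i := by
  have ha : a ≠ i := by rintro rfl; simp [hi] at hai
  intro hxi
  rcases (hxa.update_self none).total hxi with h | h
  · exact ha.symm (h.eq_of_eq_none (update_self ..))
  · exact ha (h.eq_of_eq_none (by rwa [update_of_ne ha.symm]))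

end Update

lemma Reaches.eq_of_eq_some (hi : f i = none) (h₁ : Reaches f x a) (h₂ : Reaches f x b)
    (ha : f a = some i) (hb : f b = some i) : a = b := by
  have key : ∀ {a b}, Reaches f a b → f a = some i → f b = some i → a = b := by
    intro a b hab ha hb
    rcases hab.cases_head with rfl | ⟨c, hac, hcb⟩
    · rfl
    · obtain rfl : c = i := Option.some_injective _ (hac.symm.trans ha)
      rw [Reaches.eq_of_eq_none hcb hi, hi] at hb
      cases hb
  rcases h₁.total h₂ with h | h
  · exact key h ha hb
  · exact (key h hb ha).symm

end Reaches

section Acyclic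

variable {f : V → Option V} {a b x y : V}

lemma isAcyclic_of_height (h : V → ℕ) (hh : ∀ x y, f x = some y → h y < h x) :
    IsAcyclic f := by
  intro x
  induction x using (measure h).wf.induction with
  | _ x ih =>
    cases hx : f x with
    | none => exact ⟨x, hx, .refl⟩
    | some y =>
      obtain ⟨r, hr, hyr⟩ := ih y (hh x y hx)
      exact ⟨r, hr, .head hx hyr⟩

lemma IsAcyclic.exists_height (hf : IsAcyclic f) :
    ∃ h : V → ℕ, ∀ x y, f x = some y → h y < h x := by
  classical
  have hex : ∀ x, ∃ n, f ((step f)^[n] x) = none := fun x => by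
    obtain ⟨r, hr, hxr⟩ := hf x
    obtain ⟨n, rfl⟩ := hxr.exists_step_iterate_eq
    exact ⟨n, hr⟩
  refine ⟨fun x => Nat.find (hex x), fun x y hxy => ?_⟩
  have hpos : Nat.find (hex x) ≠ 0 := by simp [hxy]
  have hroot := Nat.find_spec (hex x)
  rw [← Nat.sub_add_cancel (Nat.pos_of_ne_zero hpos), iterate_succ_apply,
    show step f x = y by simp [step, hxy]] at hroot
  show Nat.find (hex y) < Nat.find (hex x)
  have := Nat.find_le (h := hex y) hroot
  omega

lemma not_reaches_of_height (h : V → ℕ) (hh : ∀ x y, f x = some y → h y < h x)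
    (hxy : f x = some y) : ¬ Reaches f y x := by
  have hmono : ∀ {a b}, Reaches f a b → h b ≤ h a := fun hab => by
    induction hab with
    | refl => exact le_rfl
    | tail _ hbc ih => exact (hh _ _ hbc).le.trans ih
  exact fun hyx => absurd (hh x y hxy) (not_lt.mpr (hmono hyx))

section Update

variable [DecidableEq V]

lemma forall_update_eq_some {p : V → V → Prop} {v : Option V}
    (hf : ∀ x y, f x = some y → p x y) (hv : ∀ y, v = some y → p a y) :
    ∀ x y, update f a v x = some y → p x y := by
  intro x y hxy
  by_cases hx : x = a
  · subst hx
    exact hv y (by simpa using hxy)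
  · exact hf x y (by rwa [update_of_ne hx] at hxy)

lemma IsAcyclic.update_of_exists_root (hf : IsAcyclic f) {v : Option V}
    (ha : ∃ r, update f a v r = none ∧ Reaches (update f a v) a r) :
    IsAcyclic (update f a v) := by
  obtain ⟨r', hr', har'⟩ := ha
  intro x
  obtain ⟨r, hr, hxr⟩ := hf x
  rcases hxr.update_or v with hxr | ⟨-, hxa⟩
  · by_cases hra : r = a
    · exact ⟨r', hr', (hra ▸ hxr).trans har'⟩
    · exact ⟨r, by rwa [update_of_ne hra], hxr⟩
  · exact ⟨r', hr', hxa.trans har'⟩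

lemma IsAcyclic.update_none (hf : IsAcyclic f) (a : V) : IsAcyclic (update f a none) :=
  hf.update_of_exists_root ⟨a, update_self .., .refl⟩

lemma IsAcyclic.update_some (hf : IsAcyclic f) (hba : ¬ Reaches f b a) :
    IsAcyclic (update f a (some b)) := by
  obtain ⟨r, hr, hbr⟩ := hf b
  have hra : r ≠ a := fun h => hba (h ▸ hbr)
  exact hf.update_of_exists_root ⟨r, by rwa [update_of_ne hra],
    .head (update_self ..) (hbr.update_of_not_reaches hba _)⟩

end Update

variable [Fintype V]

lemma rootOf_eq_of_reaches (h : Reaches f x y) (hy : f y = none) : rootOf f x = y :=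
  step_iterate_card_eq h hy

lemma reaches_rootOf (f : V → Option V) (x : V) : Reaches f x (rootOf f x) :=
  reaches_step_iterate f x _

lemma IsAcyclic.rootOf_eq_none (hf : IsAcyclic f) (x : V) : f (rootOf f x) = none := by
  obtain ⟨r, hr, hxr⟩ := hf x
  rwa [rootOf_eq_of_reaches hxr hr]

lemma IsAcyclic.rootOf_eq_self_iff (hf : IsAcyclic f) : rootOf f x = x ↔ f x = none :=
  ⟨fun h => h ▸ hf.rootOf_eq_none x, rootOf_eq_of_reaches .refl⟩

end Acyclic

section Forests

variable [Fintype V] [DecidableEq V] {E : V → V → Prop} {f g : V → Option V} {a b : V}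

lemma mem_forests_iff_isSCF : f ∈ forests E ↔ IsSCF E f := by
  simp [forests]

lemma mem_forests_iff :
    f ∈ forests E ↔ (∀ a b, f a = some b → E a b) ∧ IsAcyclic f := by
  rw [mem_forests_iff_isSCF, IsSCF]
  exact and_congr_right fun _ =>
    ⟨fun ⟨h, hh⟩ => isAcyclic_of_height h hh, IsAcyclic.exists_height⟩

lemma not_reaches_of_mem_forests (hf : f ∈ forests E) (hab : f a = some b) :
    ¬ Reaches f b a := by
  obtain ⟨-, h, hh⟩ := mem_forests_iff_isSCF.1 hf
  exact not_reaches_of_height h hh hab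

lemma forests_nonempty (E : V → V → Prop) : (forests E).Nonempty :=
  ⟨fun _ => none, mem_forests_iff.2 ⟨by simp, fun x => ⟨x, rfl, .refl⟩⟩⟩

lemma update_none_mem_forests (hf : f ∈ forests E) (a : V) : update f a none ∈ forests E := by
  obtain ⟨hE, hac⟩ := mem_forests_iff.1 hf
  exact mem_forests_iff.2 ⟨forall_update_eq_some hE (by simp), hac.update_none a⟩

lemma update_some_mem_forests_iff (hf : f ∈ forests E) :
    update f a (some b) ∈ forests E ↔ E a b ∧ ¬ Reaches f b a := by
  constructor
  · intro h
    refine ⟨(mem_forests_iff.1 h).1 a b (update_self ..), fun hba => ?_⟩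
    refine not_reaches_of_mem_forests h (update_self a (some b) f) ?_
    exact hba.update_self _
  · rintro ⟨hab, hba⟩
    obtain ⟨hE, hac⟩ := mem_forests_iff.1 hf
    exact mem_forests_iff.2 ⟨forall_update_eq_some hE (by simpa using hab), hac.update_some hba⟩

end Forests

section Reroot

variable [Fintype V] [DecidableEq V] {E : V → V → Prop} {f g : V → Option V} {i j k : V}

open scoped Classical in
lemma card_update_none_fiber [DecidableRel E] (hg : g ∈ forests E) (hgi : g i = none) :
    #{f ∈ forests E | update f i none = g} = 1 + #{j | E i j ∧ ¬ Reaches g j i} := by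
  have hgi' : update g i none = g := by rw [← hgi, update_eq_self]
  have hfiber : {f ∈ forests E | update f i none = g}
      = ({v | update g i v ∈ forests E} : Finset (Option V)).image (update g i) := by
    ext f
    simp only [mem_filter, mem_image, mem_univ, true_and]
    constructor
    · rintro ⟨hf, rfl⟩
      exact ⟨f i, by simpa using hf, by simp⟩
    · rintro ⟨v, hv, rfl⟩
      exact ⟨hv, by rw [update_idem, hgi']⟩
  rw [hfiber, card_image_of_injective _ (update_injective g i), card_filter, Fintype.sum_option,
    card_filter]
  simp only [hgi', hg, if_true, update_some_mem_forests_iff hg]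

/-- Make `i` a root by deleting the edge leaving it, and hang its old root below it. -/
def reroot (i : V) (f : V → Option V) : V → Option V :=
  update (update f i none) (rootOf f i) (some i)

lemma reroot_apply_self (hki : rootOf f i ≠ i) : reroot i f i = none := by
  rw [reroot, update_of_ne hki.symm, update_self]

lemma reroot_apply_rootOf : reroot i f (rootOf f i) = some i :=
  update_self ..

lemma reroot_mem_forests (hf : f ∈ forests E) (hki : rootOf f i ≠ i) (hk : E (rootOf f i) i) :
    reroot i f ∈ forests E :=
  (update_some_mem_forests_iff (update_none_mem_forests hf i)).2
    ⟨hk, fun h => hki (h.eq_of_eq_none (update_self ..))⟩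

lemma reaches_reroot (hf : f ∈ forests E) (hfi : f i = some j) :
    Reaches (reroot i f) j (rootOf f i) := by
  have hjk : Reaches f j (rootOf f i) := by
    rcases (reaches_rootOf f i).cases_head with h | ⟨c, hic, hck⟩
    · have := (mem_forests_iff.1 hf).2.rootOf_eq_none i
      rw [← h, hfi] at this
      cases this
    · rw [hfi, Option.some_inj] at hic
      exact hic ▸ hck
  exact (hjk.update_of_not_reaches (not_reaches_of_mem_forests hf hfi) none).update_self _

lemma update_update_reroot (hf : IsAcyclic f) (hfi : f i = some j) :
    update (update (reroot i f) (rootOf f i) none) i (some j) = f := by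
  have hk := hf.rootOf_eq_none i
  have hki : rootOf f i ≠ i := fun h => by rw [h, hfi] at hk; cases hk
  funext x
  by_cases hxi : x = i
  · subst hxi
    simp [hfi]
  · by_cases hxk : x = rootOf f i
    · subst hxk
      simp [hxi, hk]
    · simp [reroot, hxi, hxk]

lemma update_update_mem_forests (hg : g ∈ forests E) (hgi : g i = none) (hgk : g k = some i)
    (hjk : Reaches g j k) (hij : E i j) : update (update g k none) i (some j) ∈ forests E :=
  (update_some_mem_forests_iff (update_none_mem_forests hg k)).2
    ⟨hij, not_reaches_update_none hgi hgk hjk⟩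

lemma rootOf_update_update (hgi : g i = none) (hgk : g k = some i) (hjk : Reaches g j k) :
    rootOf (update (update g k none) i (some j)) i = k := by
  have hki : k ≠ i := by rintro rfl; simp [hgi] at hgk
  refine rootOf_eq_of_reaches (.head (update_self ..)
    ((hjk.update_self none).update_of_not_reaches (not_reaches_update_none hgi hgk hjk) _)) ?_
  rw [update_of_ne hki, update_self]

lemma reroot_update_update (hgi : g i = none) (hgk : g k = some i) (hjk : Reaches g j k) :
    reroot i (update (update g k none) i (some j)) = g := by
  have hki : k ≠ i := by rintro rfl; simp [hgi] at hgk
  rw [reroot, rootOf_update_update hgi hgk hjk]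
  funext x
  by_cases hxk : x = k
  · subst hxk
    simp [hgk]
  · by_cases hxi : x = i
    · subst hxi
      simp [hxk, hgi]
    · simp [hxk, hxi]

lemma exists_apply_eq_some_of_rootOf_ne (hf : f ∈ forests E) (hki : rootOf f i ≠ i) :
    ∃ j, f i = some j :=
  Option.ne_none_iff_exists'.mp fun h =>
    hki (((mem_forests_iff.1 hf).2.rootOf_eq_self_iff).2 h)

open scoped Classical in
lemma card_reroot_fiber [DecidableRel E] (hE : ∀ a, ¬ E a a) (hg : g ∈ forests E)
    (hgi : g i = none) :
    #{f ∈ forests E | E (rootOf f i) i ∧ reroot i f = g} = #{j | E i j ∧ Reaches g j i} := by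
  have hne : ∀ {a b}, E a b → a ≠ b := fun hab h => hE _ (by rwa [h] at hab)
  apply card_nbij fun f => (f i).getD i
  · intro f hf
    obtain ⟨hfF, hk, rfl⟩ := mem_filter.1 (mem_coe.1 hf)
    obtain ⟨j, hfi⟩ := exists_apply_eq_some_of_rootOf_ne hfF (hne hk)
    simp only [hfi, Option.getD_some, coe_filter, mem_univ, true_and, Set.mem_ofPred_eq]
    exact ⟨(mem_forests_iff.1 hfF).1 i j hfi, (reaches_reroot hfF hfi).tail reroot_apply_rootOf⟩
  · intro f₁ hf₁ f₂ hf₂ hj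
    obtain ⟨hf₁, hk₁, hg₁⟩ := mem_filter.1 (mem_coe.1 hf₁)
    obtain ⟨hf₂, hk₂, hg₂⟩ := mem_filter.1 (mem_coe.1 hf₂)
    obtain ⟨j, hfi₁⟩ := exists_apply_eq_some_of_rootOf_ne hf₁ (hne hk₁)
    obtain ⟨j', hfi₂⟩ := exists_apply_eq_some_of_rootOf_ne hf₂ (hne hk₂)
    obtain rfl : j = j' := by simpa [hfi₁, hfi₂] using hj
    have hr : rootOf f₁ i = rootOf f₂ i :=
      Reaches.eq_of_eq_some hgi (hg₁ ▸ reaches_reroot hf₁ hfi₁) (hg₂ ▸ reaches_reroot hf₂ hfi₂)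
        (hg₁ ▸ reroot_apply_rootOf) (hg₂ ▸ reroot_apply_rootOf)
    rw [← update_update_reroot (mem_forests_iff.1 hf₁).2 hfi₁,
      ← update_update_reroot (mem_forests_iff.1 hf₂).2 hfi₂, hg₁, hg₂, hr]
  · intro j hj
    obtain ⟨-, hij, hji⟩ := mem_filter.1 (mem_coe.1 hj)
    obtain rfl | ⟨k, hjk, hgk⟩ := hji.cases_tail
    · exact absurd hij (hE i)
    refine ⟨update (update g k none) i (some j), mem_coe.2 (mem_filter.2
      ⟨update_update_mem_forests hg hgi hgk hjk hij, ?_, reroot_update_update hgi hgk hjk⟩),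
      by simp⟩
    rw [rootOf_update_update hgi hgk hjk]
    exact (mem_forests_iff.1 hg).1 k i hgk

open scoped Classical in
lemma card_forests_add_card_filter_rootOf [DecidableRel E] (hE : ∀ a, ¬ E a a) (i : V) :
    #(forests E) + #{f ∈ forests E | E (rootOf f i) i}
      = (1 + outDeg E i) * #{f ∈ forests E | f i = none} := by
  have hmaps₁ : ∀ f ∈ forests E, update f i none ∈ {g ∈ forests E | g i = none} :=
    fun f hf => mem_filter.2 ⟨update_none_mem_forests hf i, update_self ..⟩
  have hmaps₂ : ∀ f ∈ {f ∈ forests E | E (rootOf f i) i},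
      reroot i f ∈ {g ∈ forests E | g i = none} := by
    intro f hf
    obtain ⟨hf, hk⟩ := mem_filter.1 hf
    have hki : rootOf f i ≠ i := fun h => hE i (by rwa [h] at hk)
    exact mem_filter.2 ⟨reroot_mem_forests hf hki hk, reroot_apply_self hki⟩
  rw [card_eq_sum_card_fiberwise hmaps₁, card_eq_sum_card_fiberwise hmaps₂, ← sum_add_distrib,
    mul_comm, ← sum_const_nat]
  intro g hg
  obtain ⟨hg, hgi⟩ := mem_filter.1 hg
  rw [filter_filter, card_update_none_fiber hg hgi, card_reroot_fiber hE hg hgi, outDeg,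
    ← card_filter_add_card_filter_not (s := {j | E i j}) (fun j => Reaches g j i),
    filter_filter, filter_filter]
  ring

end Reroot

section Estimator

variable [Fintype V] [DecidableEq V] {E : V → V → Prop}

lemma one_add_outDeg_mul_fOmega_self [DecidableRel E] (hE : ∀ a, ¬ E a a) (i : V) :
    (1 + outDeg E i : ℝ) * fOmega E i i = 1 + ∑ k ∈ inNbrs E i, fOmega E i k := by
  have hroot : {f ∈ forests E | rootOf f i = i} = {f ∈ forests E | f i = none} :=
    filter_congr fun f hf => (mem_forests_iff.1 hf).2.rootOf_eq_self_iff
  have hin : ∑ k ∈ inNbrs E i, #{f ∈ forests E | rootOf f i = k}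
      = #{f ∈ forests E | E (rootOf f i) i} := by
    rw [sum_card_fiberwise_eq_card_filter]
    simp [inNbrs]
  have hF : (#(forests E) : ℝ) ≠ 0 := by exact_mod_cast (forests_nonempty E).card_pos.ne'
  simp only [fOmega, ← sum_div, hroot, ← Nat.cast_sum, hin]
  field_simp
  exact_mod_cast (card_forests_add_card_filter_rootOf hE i).symm

lemma fOmega_nonneg (E : V → V → Prop) (i j : V) : 0 ≤ fOmega E i j := by
  unfold fOmega
  positivity

lemma fOmega_le_one (E : V → V → Prop) (i j : V) : fOmega E i j ≤ 1 :=
  div_le_one_of_le₀ (by exact_mod_cast card_filter_le _ _) (by positivity)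

lemma expVal_add (g h : (V → Option V) → ℝ) :
    expVal E (fun f => g f + h f) = expVal E g + expVal E h := by
  simp only [expVal, sum_add_distrib, add_div]

lemma expVal_const_mul (c : ℝ) (g : (V → Option V) → ℝ) :
    expVal E (fun f => c * g f) = c * expVal E g := by
  simp only [expVal, ← mul_sum, mul_div_assoc]

lemma expVal_const (c : ℝ) : expVal E (fun _ => c) = c := by
  have hF : (#(forests E) : ℝ) ≠ 0 := by exact_mod_cast (forests_nonempty E).card_pos.ne'
  simp only [expVal, sum_const, nsmul_eq_mul]
  field_simp

lemma expVal_sum {ι : Type*} (s : Finset ι) (g : ι → (V → Option V) → ℝ) :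
    expVal E (fun f => ∑ k ∈ s, g k f) = ∑ k ∈ s, expVal E (g k) := by
  simp only [expVal, sum_div]
  exact sum_comm

lemma expVal_indEst (i k : V) : expVal E (indEst i k) = fOmega E i k := by
  simp [expVal, fOmega, indEst]

lemma varVal_eq_expVal_sq_sub_sq (g : (V → Option V) → ℝ) :
    varVal E g = expVal E (fun f => g f ^ 2) - expVal E g ^ 2 := by
  have hsq : (fun f => (g f - expVal E g) ^ 2)
      = fun f => g f ^ 2 + (-2 * expVal E g * g f + expVal E g ^ 2) := by
    funext f
    ring
  rw [varVal, hsq, expVal_add, expVal_add, expVal_const_mul, expVal_const]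
  ring

lemma sum_indEst (i : V) (s : Finset V) (f : V → Option V) :
    ∑ k ∈ s, indEst i k f = if rootOf f i ∈ s then 1 else 0 :=
  sum_ite_eq s _ _

end Estimator

lemma three_mul_div_sub_two_div_sq_le {ω : ℝ} (h₀ : 0 ≤ ω) (h₁ : ω ≤ 1) (d : ℕ) :
    3 * ω / (1 + d) - 2 / (1 + d) ^ 2 ≤ ω := by
  have hD : (0 : ℝ) < 1 + d := by positivity
  -- `ω (1 + d)² - 3 ω (1 + d) + 2 = ω d (d - 1) + 2 (1 - ω)`
  have hd : (0 : ℝ) ≤ d * (d - 1) := by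
    rcases d with _ | d
    · simp
    · push_cast
      nlinarith
  rw [div_sub_div _ _ hD.ne' (by positivity), div_le_iff₀ (by positivity)]
  nlinarith [mul_nonneg (mul_nonneg h₀ hd) hD.le, mul_nonneg (sub_nonneg.2 h₁) hD.le]

end ConvergingForest

open ConvergingForest

/-- for any node i, the estimator
ω̄_ii(φ) = (1/(1+d_i))·(1 + Σ_{k ∈ N⁻(i)} ω̂_ik(φ)) is unbiased for ω_ii with
variance 3ω_ii/(1+d_i) − 2/(1+d_i)² − ω_ii², which is at most the variance
ω_ii − ω_ii² of the indicator estimator. -/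
theorem diagEst_unbiased_variance_reduced {V : Type*} [Fintype V] [DecidableEq V]
    (E : V → V → Prop) [DecidableRel E] (hE : ∀ i, ¬ E i i) (i : V) :
    expVal E (fun f => (1 / (1 + (outDeg E i : ℝ))) *
        (1 + ∑ k ∈ inNbrs E i, indEst i k f)) = fOmega E i i ∧
    varVal E (fun f => (1 / (1 + (outDeg E i : ℝ))) *
        (1 + ∑ k ∈ inNbrs E i, indEst i k f))
      = 3 * fOmega E i i / (1 + (outDeg E i : ℝ))
          - 2 / (1 + (outDeg E i : ℝ)) ^ 2 - (fOmega E i i) ^ 2 ∧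
    varVal E (fun f => (1 / (1 + (outDeg E i : ℝ))) *
        (1 + ∑ k ∈ inNbrs E i, indEst i k f))
      ≤ fOmega E i i - (fOmega E i i) ^ 2 := by
  set D : ℝ := 1 + outDeg E i
  set S : (V → Option V) → ℝ := fun f => ∑ k ∈ inNbrs E i, indEst i k f with hS
  have hD : D ≠ 0 := by positivity
  have hES : expVal E S = D * fOmega E i i - 1 := by
    rw [hS, expVal_sum]
    simp only [expVal_indEst]
    linarith [one_add_outDeg_mul_fOmega_self hE i]
  have hmean : expVal E (fun f => 1 / D * (1 + S f)) = fOmega E i i := by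
    rw [expVal_const_mul, expVal_add, expVal_const, hES]
    field_simp
    ring
  -- `S` is an indicator
  have hsq : (fun f => (1 / D * (1 + S f)) ^ 2) = fun f => (1 / D) ^ 2 * (1 + 3 * S f) := by
    funext f
    simp only [hS, sum_indEst]
    split_ifs <;> ring
  have hvar : varVal E (fun f => 1 / D * (1 + S f))
      = 3 * fOmega E i i / D - 2 / D ^ 2 - fOmega E i i ^ 2 := by
    rw [varVal_eq_expVal_sq_sub_sq, hsq, expVal_const_mul, expVal_add, expVal_const,
      expVal_const_mul, hES, hmean]
    field_simp
    ring
  refine ⟨hmean, hvar, hvar.trans_le ?_⟩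
  linarith [three_mul_div_sub_two_div_sq_le (fOmega_nonneg E i i) (fOmega_le_one E i i)
    (outDeg E i)]
end

section
/- The variance gap Var(ω̂_ii) − Var(ω̄_ii) equals 2(1−ω_ii)/(1+d_i)² + d_i(d_i−1)ω_ii/(1+d_i)², which is nonnegative since 0 ≤ ω_ii ≤ 1 and d_i ≥ 0. -/
open Finset

/-!
Both estimators are affine images of indicators: `ω̂_ii = 1[r(i) = i]` and
`ω̄_ii = (1 + 1[r(i) ∈ N⁻(i)]) / (1 + d_i)`, so their variances are `p - p²` for the respective
probabilities, and everything reduces to the diagonal entry of `Ω (I + L) = I`: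
`(1 + d_i) ω_ii = 1 + P(r(i) ∈ N⁻(i))`.

That identity is a double count of the pairs `(φ, j)` with `i` a root of `φ` and `i → j` an edge.
If `j` is not in the tree of `i`, adding the edge `i → j` gives a forest in which `i` is not a root.
Otherwise it closes a cycle `i → j → ⋯ → v → i`, and cutting `v → i` gives a forest in which the
root `v` of `i` is an in-neighbour of `i`. Both operations are bijective.
-/

open Function

lemma Function.iterate_eq_iterate_of_forall_lt {α : Type*} {s s' : α → α} {x : α} {t : ℕ}
    (h : ∀ m < t, s (s^[m] x) = s' (s^[m] x)) : s^[t] x = s'^[t] x := by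
  induction t with
  | zero => rfl
  | succ t ih =>
    rw [iterate_succ_apply', iterate_succ_apply', ← ih fun m hm => h m (by omega), h t (by omega)]

section Forests

variable {V : Type*} {E : V → V → Prop} {f : V → Option V} {i j r x y : V}

def forestStep (f : V → Option V) (x : V) : V := (f x).getD x

lemma forestStep_of_eq_none (h : f x = none) : forestStep f x = x := by
  simp [forestStep, h]

lemma forestStep_of_eq_some (h : f x = some y) : forestStep f x = y := by
  simp [forestStep, h]

lemma eq_some_forestStep_of_ne (h : forestStep f x ≠ x) : f x = some (forestStep f x) := by
  cases hx : f x <;> simp_all [forestStep]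

lemma iterate_forestStep_update [DecidableEq V] {t : ℕ} (o : Option V)
    (h : ∀ m < t, (forestStep f)^[m] x ≠ r) :
    (forestStep (update f r o))^[t] x = (forestStep f)^[t] x :=
  (iterate_eq_iterate_of_forall_lt fun m hm => by simp [forestStep, update_of_ne (h m hm)]).symm

lemma IsSCF.iterate_ne_of_eq_some (hf : IsSCF E f) (h : f x = some y) (t : ℕ) :
    (forestStep f)^[t] y ≠ x := by
  obtain ⟨-, height, hh⟩ := hf
  have hle : ∀ t, height ((forestStep f)^[t] y) ≤ height y := fun t => by
    induction t with
    | zero => rfl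
    | succ t ih =>
      rw [iterate_succ_apply']
      cases hz : f ((forestStep f)^[t] y) with
      | none => rwa [forestStep_of_eq_none hz]
      | some z => rw [forestStep_of_eq_some hz]; exact (hh _ _ hz).le.trans ih
  intro heq
  have := heq ▸ hle t
  have := hh _ _ h
  omega

lemma isSCF_of_forall_exists_iterate (hE : ∀ x y, f x = some y → E x y)
    (hroot : ∀ x, ∃ t, f ((forestStep f)^[t] x) = none) : IsSCF E f := by
  classical
  -- the time needed to reach a root is a height function
  refine ⟨hE, fun x => Nat.find (hroot x), fun x y hxy => ?_⟩
  have hx := Nat.find_spec (hroot x)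
  obtain ⟨t, ht⟩ : ∃ t, Nat.find (hroot x) = t + 1 :=
    Nat.exists_eq_succ_of_ne_zero fun h0 => by rw [h0] at hx; simp [hxy] at hx
  rw [ht, iterate_succ_apply, forestStep_of_eq_some hxy] at hx
  have := Nat.find_min' (hroot y) hx
  show Nat.find (hroot y) < Nat.find (hroot x)
  omega

lemma IsSCF.update_none [DecidableEq V] (hf : IsSCF E f) (r : V) : IsSCF E (update f r none) := by
  obtain ⟨hE, h, hh⟩ := hf
  have hsub : ∀ {x y}, update f r none x = some y → f x = some y := fun hxy => by
    rw [update_apply] at hxy; split_ifs at hxy; exact hxy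
  exact ⟨fun x y hxy => hE x y (hsub hxy), h, fun x y hxy => hh x y (hsub hxy)⟩

open Classical in
/-- The node from which the path starting at `j` first steps onto `i` (junk value `j` if it
never does). -/
noncomputable def lastBefore (f : V → Option V) (i j : V) : V :=
  if h : ∃ t, (forestStep f)^[t + 1] j = i then (forestStep f)^[Nat.find h] j else j

lemma lastBefore_eq {t : ℕ} (ht : (forestStep f)^[t + 1] j = i)
    (hmin : ∀ m < t, (forestStep f)^[m + 1] j ≠ i) :
    lastBefore f i j = (forestStep f)^[t] j := by
  classical
  have hex : ∃ t, (forestStep f)^[t + 1] j = i := ⟨t, ht⟩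
  rw [lastBefore, dif_pos hex, (Nat.find_eq_iff hex).2 ⟨ht, hmin⟩]

variable [Fintype V]

lemma rootOf_eq_iterate (f : V → Option V) (x : V) :
    rootOf f x = (forestStep f)^[Fintype.card V] x := rfl

lemma rootOf_of_eq_none (h : f x = none) : rootOf f x = x :=
  iterate_fixed (forestStep_of_eq_none h) _

lemma rootOf_update_of_forall_ne [DecidableEq V] (o : Option V)
    (h : ∀ t, (forestStep f)^[t] x ≠ r) : rootOf (update f r o) x = rootOf f x :=
  iterate_forestStep_update o fun m _ => h m

namespace IsSCF

lemma exists_iterate_eq_none_le_card (hf : IsSCF E f) (x : V) :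
    ∃ m ≤ Fintype.card V, f ((forestStep f)^[m] x) = none := by
  obtain ⟨-, h, hh⟩ := hf
  by_contra! hne
  -- otherwise the heights of the first `card V + 1` points of the path are strictly decreasing
  have hanti : StrictAnti fun m : Fin (Fintype.card V + 1) => h ((forestStep f)^[m] x) := by
    refine Fin.strictAnti_iff_succ_lt.2 fun m => ?_
    obtain ⟨y, hy⟩ := Option.ne_none_iff_exists'.1 (hne m m.isLt.le)
    simpa [iterate_succ_apply', forestStep_of_eq_some hy] using hh _ _ hy
  simpa using Fintype.card_le_of_injective _ hanti.injective.of_comp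

lemma apply_rootOf (hf : IsSCF E f) (x : V) : f (rootOf f x) = none := by
  obtain ⟨m, hm, hroot⟩ := hf.exists_iterate_eq_none_le_card x
  rwa [rootOf_eq_iterate, ← Nat.sub_add_cancel hm, iterate_add_apply,
    iterate_fixed (forestStep_of_eq_none hroot)]

lemma rootOf_iterate (hf : IsSCF E f) (x : V) (t : ℕ) :
    rootOf f ((forestStep f)^[t] x) = rootOf f x := by
  rw [rootOf_eq_iterate, ← iterate_add_apply, add_comm, iterate_add_apply, ← rootOf_eq_iterate,
    iterate_fixed (forestStep_of_eq_none (hf.apply_rootOf x))]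

lemma rootOf_eq_self_iff (hf : IsSCF E f) : rootOf f x = x ↔ f x = none :=
  ⟨fun h => h ▸ hf.apply_rootOf x, rootOf_of_eq_none⟩

lemma rootOf_eq_of_iterate {t : ℕ} (hf : IsSCF E f) (h : f ((forestStep f)^[t] x) = none) :
    rootOf f x = (forestStep f)^[t] x := by
  rw [← hf.rootOf_iterate x t, rootOf_of_eq_none h]

lemma rootOf_of_eq_some (hf : IsSCF E f) (h : f x = some y) : rootOf f y = rootOf f x := by
  simpa [forestStep_of_eq_some h] using hf.rootOf_iterate x 1

lemma iterate_ne_of_rootOf_ne (hf : IsSCF E f) (hr : f r = none) (hy : rootOf f y ≠ r) (t : ℕ) :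
    (forestStep f)^[t] y ≠ r := fun ht => hy <| by
  rw [← hf.rootOf_iterate y t, ht, rootOf_of_eq_none hr]

end IsSCF

variable [DecidableEq V]

lemma exists_iterate_update_eq_of_rootOf_eq (hy : rootOf f y = r) (o : Option V) :
    ∃ t, (forestStep (update f r o))^[t] y = r := by
  have hex : ∃ t, (forestStep f)^[t] y = r := ⟨_, hy⟩
  exact ⟨Nat.find hex,
    (iterate_forestStep_update o fun m hm => Nat.find_min hex hm).trans (Nat.find_spec hex)⟩

namespace IsSCF

lemma rootOf_update_of_rootOf_ne (hf : IsSCF E f) (hr : f r = none) (hy : rootOf f y ≠ r)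
    (o : Option V) : rootOf (update f r o) y = rootOf f y :=
  rootOf_update_of_forall_ne o (hf.iterate_ne_of_rootOf_ne hr hy)

lemma update_some (hf : IsSCF E f) (hr : f r = none) (hx : rootOf f x ≠ r) (hrx : E r x) :
    IsSCF E (update f r (some x)) := by
  have hreach : ∀ y, rootOf f y ≠ r →
      update f r (some x) ((forestStep (update f r (some x)))^[Fintype.card V] y) = none :=
    fun y hy => by
      rw [← rootOf_eq_iterate, hf.rootOf_update_of_rootOf_ne hr hy, update_of_ne hy,
        hf.apply_rootOf]
  refine isSCF_of_forall_exists_iterate (fun a b hab => ?_) fun y => ?_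
  · rcases eq_or_ne a r with rfl | ha
    · obtain rfl : x = b := by simpa using hab
      exact hrx
    · rw [update_of_ne ha] at hab
      exact hf.1 a b hab
  · by_cases hy : rootOf f y = r
    · obtain ⟨t, ht⟩ := exists_iterate_update_eq_of_rootOf_eq hy (some x)
      refine ⟨Fintype.card V + (1 + t), ?_⟩
      rw [iterate_add_apply, iterate_add_apply, ht, iterate_one,
        forestStep_of_eq_some (update_self r (some x) f)]
      exact hreach x hx
    · exact ⟨_, hreach y hy⟩

lemma rootOf_update_some_of_rootOf_eq (hf : IsSCF E f) (hr : f r = none) (hx : rootOf f x ≠ r)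
    (hrx : E r x) (hy : rootOf f y = r) : rootOf (update f r (some x)) y = rootOf f x := by
  have hg := hf.update_some hr hx hrx
  obtain ⟨t, ht⟩ := exists_iterate_update_eq_of_rootOf_eq hy (some x)
  rw [← hg.rootOf_iterate y t, ht, ← hg.rootOf_of_eq_some (update_self r (some x) f),
    hf.rootOf_update_of_rootOf_ne hr hx]

/-- Adding the edge `i → j` to a forest in which `j` lies in the tree of the root `i` closes a
cycle; cutting the edge of that cycle which enters `i` gives a forest in which `i` hangs below the
new root `lastBefore f i j`. -/
lemma reroute_of_rootOf_eq (hE : ∀ a, ¬ E a a) (hf : IsSCF E f) (hfi : f i = none)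
    (hij : E i j) (hroot : rootOf f j = i) :
    f (lastBefore f i j) = some i ∧
      IsSCF E (update (update f (lastBefore f i j) none) i (some j)) ∧
      rootOf (update (update f (lastBefore f i j) none) i (some j)) i = lastBefore f i j := by
  have hji : j ≠ i := fun h => hE i (h ▸ hij)
  have hex : ∃ t, (forestStep f)^[t] j = i := ⟨_, hroot⟩
  obtain ⟨t, ht⟩ : ∃ t, Nat.find hex = t + 1 :=
    Nat.exists_eq_succ_of_ne_zero fun h0 => hji (by simpa [h0] using Nat.find_spec hex)
  have hhit : (forestStep f)^[t + 1] j = i := ht ▸ Nat.find_spec hex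
  have hbefore : ∀ m ≤ t, (forestStep f)^[m] j ≠ i := fun m hm => Nat.find_min hex (by omega)
  rw [lastBefore_eq hhit fun m hm => hbefore (m + 1) hm]
  set v := (forestStep f)^[t] j
  have hvi : v ≠ i := hbefore t le_rfl
  have hstep : forestStep f v = i := by rw [← hhit, iterate_succ_apply']
  have hfv : f v = some i := hstep ▸ eq_some_forestStep_of_ne (hstep ▸ hvi.symm)
  have hf' := hf.update_none v
  have hf'i : update f v none i = none := by rw [update_of_ne hvi.symm, hfi]
  have hroot' : rootOf (update f v none) j = v := by
    have hagree := iterate_forestStep_update (f := f) (x := j) (r := v) (t := t) none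
      fun m hm heq => hbefore (m + 1) (by omega) (by rw [iterate_succ_apply', heq, hstep])
    rw [hf'.rootOf_eq_of_iterate (t := t) (by rw [hagree, update_self]), hagree]
  have hroot'i : rootOf (update f v none) j ≠ i := by rw [hroot']; exact hvi
  have hg := hf'.update_some hf'i hroot'i hij
  refine ⟨hfv, hg, ?_⟩
  rw [← hg.rootOf_of_eq_some (update_self i (some j) (update f v none)),
    hf'.rootOf_update_of_rootOf_ne hf'i hroot'i, hroot']

/-- The inverse of `reroute_of_rootOf_eq`: hang the root of `i` below `i` and cut the edge
leaving `i`. -/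
lemma reroute_of_eq_some {h : V → Option V} (hE : ∀ a, ¬ E a a) (hh : IsSCF E h)
    (hhi : h i = some j) (hk : E (rootOf h i) i) :
    IsSCF E (update (update h i none) (rootOf h i) (some i)) ∧
      rootOf (update (update h i none) (rootOf h i) (some i)) j = i ∧
      lastBefore (update (update h i none) (rootOf h i) (some i)) i j = rootOf h i := by
  set k := rootOf h i
  have hki : k ≠ i := fun he => hE i (he ▸ hk)
  have hh' := hh.update_none i
  have hh'k : update h i none k = none := by rw [update_of_ne hki]; exact hh.apply_rootOf i
  have hh'i : update h i none i = none := update_self _ _ _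
  have hroot'i : rootOf (update h i none) i = i := rootOf_of_eq_none hh'i
  have hroot'j : rootOf (update h i none) j = k := by
    rw [rootOf_update_of_forall_ne none (hh.iterate_ne_of_eq_some hhi), hh.rootOf_of_eq_some hhi]
  have hik : rootOf (update h i none) i ≠ k := by rw [hroot'i]; exact hki.symm
  have hg := hh'.update_some hh'k hik hk
  refine ⟨hg, ?_, ?_⟩
  · rw [hh'.rootOf_update_some_of_rootOf_eq hh'k hik hk hroot'j, hroot'i]
  · have hex : ∃ t, (forestStep (update h i none))^[t] j = k := ⟨_, hroot'j⟩
    have hagree : ∀ m ≤ Nat.find hex,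
        (forestStep (update (update h i none) k (some i)))^[m] j =
          (forestStep (update h i none))^[m] j := fun m hm =>
      iterate_forestStep_update _ fun m' hm' => Nat.find_min hex (by omega)
    have havoid := hh'.iterate_ne_of_rootOf_ne hh'i (by rw [hroot'j]; exact hki)
    refine (lastBefore_eq ?_ fun m hm => ?_).trans (by rw [hagree _ le_rfl, Nat.find_spec hex])
    · rw [iterate_succ_apply', hagree _ le_rfl, Nat.find_spec hex,
        forestStep_of_eq_some (update_self _ _ _)]
    · rw [hagree _ hm]
      exact havoid _

end IsSCF

lemma mem_forests : f ∈ forests E ↔ IsSCF E f := by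
  simp [forests]

lemma forests_nonempty : (forests E).Nonempty :=
  ⟨fun _ => none, mem_forests.2 ⟨fun _ _ h => (by cases h), 0, fun _ _ h => (by cases h)⟩⟩

lemma card_forests_ne_zero : (#(forests E) : ℝ) ≠ 0 := by
  exact_mod_cast forests_nonempty.card_pos.ne'

lemma expVal_ite (P : (V → Option V) → Prop) [DecidablePred P] :
    expVal E (fun f => if P f then 1 else 0) = #((forests E).filter P) / #(forests E) := by
  rw [expVal, sum_boole]

lemma expVal_indEst (i j : V) : expVal E (indEst i j) = fOmega E i j :=
  expVal_ite _

lemma sum_indEst (s : Finset V) (i : V) (f : V → Option V) :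
    ∑ k ∈ s, indEst i k f = if rootOf f i ∈ s then 1 else 0 :=
  sum_ite_eq _ _ _

lemma expVal_mul_add (a b : ℝ) (g : (V → Option V) → ℝ) :
    expVal E (fun f => a * (b + g f)) = a * (b + expVal E g) := by
  have := card_forests_ne_zero (E := E)
  simp only [expVal, ← mul_sum, sum_add_distrib, sum_const, nsmul_eq_mul]
  field_simp

lemma varVal_mul_add (a b : ℝ) (g : (V → Option V) → ℝ) :
    varVal E (fun f => a * (b + g f)) = a ^ 2 * varVal E g := by
  calc varVal E (fun f => a * (b + g f))
      = expVal E (fun f => a ^ 2 * (0 + (g f - expVal E g) ^ 2)) := by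
        rw [varVal, expVal_mul_add]; congr 1; funext f; ring
    _ = a ^ 2 * varVal E g := by rw [expVal_mul_add, zero_add, varVal]

lemma varVal_eq_expVal_sq_sub (g : (V → Option V) → ℝ) :
    varVal E g = expVal E (fun f => g f ^ 2) - expVal E g ^ 2 := by
  have := card_forests_ne_zero (E := E)
  simp only [varVal, expVal, sub_sq, sum_add_distrib, sum_sub_distrib, ← sum_mul, ← mul_sum,
    sum_const, nsmul_eq_mul]
  field_simp
  ring

lemma varVal_ite (P : (V → Option V) → Prop) [DecidablePred P] :
    varVal E (fun f => if P f then 1 else 0) =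
      expVal E (fun f => if P f then 1 else 0) - expVal E (fun f => if P f then 1 else 0) ^ 2 := by
  rw [varVal_eq_expVal_sq_sub]
  congr 2
  funext f
  split_ifs <;> norm_num

lemma varVal_indEst (i j : V) : varVal E (indEst i j) = fOmega E i j - fOmega E i j ^ 2 := by
  rw [← expVal_indEst]
  exact varVal_ite _

lemma fOmega_nonneg (i j : V) : 0 ≤ fOmega E i j := by
  unfold fOmega
  positivity

lemma fOmega_le_one (i j : V) : fOmega E i j ≤ 1 :=
  div_le_one_of_le₀ (by exact_mod_cast card_filter_le _ _) (Nat.cast_nonneg _)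

variable [DecidableRel E]

noncomputable def rootEdgePairs (E : V → V → Prop) [DecidableRel E] (i : V) :
    Finset ((V → Option V) × V) :=
  (forests E).filter (fun f => f i = none) ×ˢ univ.filter (E i)

lemma mem_rootEdgePairs {p : (V → Option V) × V} :
    p ∈ rootEdgePairs E i ↔ (IsSCF E p.1 ∧ p.1 i = none) ∧ E i p.2 := by
  simp [rootEdgePairs, mem_forests]

lemma card_rootEdgePairs_filter_rootOf_ne (i : V) :
    #((rootEdgePairs E i).filter fun p => ¬ rootOf p.1 p.2 = i) =
      #((forests E).filter fun g => ¬ g i = none) := by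
  refine card_nbij' (fun p => update p.1 i (some p.2)) (fun g => (update g i none, (g i).getD i))
    ?_ ?_ ?_ ?_
  · rintro ⟨f, j⟩ hp
    simp only [mem_coe, mem_filter, mem_rootEdgePairs, mem_forests] at hp ⊢
    obtain ⟨⟨⟨hf, hfi⟩, hij⟩, hroot⟩ := hp
    exact ⟨hf.update_some hfi hroot hij, by simp⟩
  · intro g hg
    obtain ⟨hg, hgi⟩ := mem_filter.1 hg
    rw [mem_forests] at hg
    obtain ⟨j, hj⟩ := Option.ne_none_iff_exists'.1 hgi
    simp only [mem_coe, mem_filter, mem_rootEdgePairs, hj, Option.getD_some, update_self,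
      and_true]
    refine ⟨⟨hg.update_none i, hg.1 i j hj⟩, ?_⟩
    rw [rootOf_update_of_forall_ne none (hg.iterate_ne_of_eq_some hj), hg.rootOf_of_eq_some hj,
      hg.rootOf_eq_self_iff]
    exact hgi
  · rintro ⟨f, j⟩ hp
    simp only [mem_coe, mem_filter, mem_rootEdgePairs] at hp
    simp [← hp.1.1.2]
  · intro g hg
    obtain ⟨j, hj⟩ := Option.ne_none_iff_exists'.1 (mem_filter.1 hg).2
    simp only [update_idem, hj, Option.getD_some]
    rw [← hj, update_eq_self]

lemma card_rootEdgePairs_filter_rootOf_eq (hE : ∀ a, ¬ E a a) (i : V) :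
    #((rootEdgePairs E i).filter fun p => rootOf p.1 p.2 = i) =
      #((forests E).filter fun h => rootOf h i ∈ inNbrs E i) := by
  have hmem : ∀ {h}, h ∈ (forests E).filter (fun h => rootOf h i ∈ inNbrs E i) ↔
      IsSCF E h ∧ E (rootOf h i) i := by
    simp [mem_forests, inNbrs]
  have hsucc : ∀ {h}, IsSCF E h → E (rootOf h i) i → ∃ j, h i = some j := fun hh hk =>
    Option.ne_none_iff_exists'.1 fun hi => hE i (by rwa [hh.rootOf_eq_self_iff.2 hi] at hk)
  refine card_nbij' (fun p => update (update p.1 (lastBefore p.1 i p.2) none) i (some p.2))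
    (fun h => (update (update h i none) (rootOf h i) (some i), (h i).getD i)) ?_ ?_ ?_ ?_
  · rintro ⟨f, j⟩ hp
    simp only [mem_coe, mem_filter, mem_rootEdgePairs] at hp
    obtain ⟨⟨⟨hf, hfi⟩, hij⟩, hroot⟩ := hp
    obtain ⟨hfv, hg, hgroot⟩ := hf.reroute_of_rootOf_eq hE hfi hij hroot
    rw [mem_coe, hmem, hgroot]
    exact ⟨hg, hf.1 _ _ hfv⟩
  · intro h hh
    obtain ⟨hh, hk⟩ := hmem.1 hh
    obtain ⟨j, hj⟩ := hsucc hh hk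
    obtain ⟨hg, hgroot, -⟩ := hh.reroute_of_eq_some hE hj hk
    have hki : rootOf h i ≠ i := fun he => hE i (by rwa [he] at hk)
    simp only [mem_coe, mem_filter, mem_rootEdgePairs, hj, Option.getD_some,
      update_of_ne hki.symm, update_self]
    exact ⟨⟨⟨hg, trivial⟩, hh.1 i j hj⟩, hgroot⟩
  · rintro ⟨f, j⟩ hp
    simp only [mem_coe, mem_filter, mem_rootEdgePairs] at hp
    obtain ⟨⟨⟨hf, hfi⟩, hij⟩, hroot⟩ := hp
    obtain ⟨hfv, -, hgroot⟩ := hf.reroute_of_rootOf_eq hE hfi hij hroot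
    simp only [hgroot, update_self, Option.getD_some, Prod.mk.injEq, and_true]
    funext z
    simp only [update_apply]
    split_ifs <;> simp_all
  · intro h hh
    obtain ⟨hh, hk⟩ := hmem.1 hh
    obtain ⟨j, hj⟩ := hsucc hh hk
    obtain ⟨-, -, hlast⟩ := hh.reroute_of_eq_some hE hj hk
    have hroot := hh.apply_rootOf i
    simp only [hj, Option.getD_some, hlast]
    funext z
    simp only [update_apply]
    split_ifs <;> simp_all

theorem one_add_outDeg_mul_card_rootOf_self (hE : ∀ a, ¬ E a a) (i : V) :
    (1 + outDeg E i) * #((forests E).filter fun f => rootOf f i = i) =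
      #(forests E) + #((forests E).filter fun f => rootOf f i ∈ inNbrs E i) := by
  have hroots : (forests E).filter (fun f => rootOf f i = i) = (forests E).filter (· i = none) :=
    filter_congr fun f hf => (mem_forests.1 hf).rootOf_eq_self_iff
  have hpairs := card_filter_add_card_filter_not (s := rootEdgePairs E i)
    fun p => rootOf p.1 p.2 = i
  have hforests := card_filter_add_card_filter_not (s := forests E) fun f => f i = none
  rw [card_rootEdgePairs_filter_rootOf_eq hE, card_rootEdgePairs_filter_rootOf_ne,
    rootEdgePairs, card_product] at hpairs
  change _ = _ * outDeg E i at hpairs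
  rw [hroots]
  linarith

theorem one_add_outDeg_mul_fOmega_self (hE : ∀ a, ¬ E a a) (i : V) :
    (1 + outDeg E i) * fOmega E i i =
      1 + expVal E (fun f => if rootOf f i ∈ inNbrs E i then 1 else 0) := by
  have hcount := one_add_outDeg_mul_card_rootOf_self hE i
  have := card_forests_ne_zero (E := E)
  rw [fOmega, expVal_ite]
  field_simp
  exact_mod_cast hcount

end Forests

/-- the variance gap Var(ω̂_ii) − Var(ω̄_ii) equals
2(1−ω_ii)/(1+d_i)² + d_i(d_i−1)ω_ii/(1+d_i)², which is nonnegative. -/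
theorem diag_variance_gap {V : Type*} [Fintype V] [DecidableEq V]
    (E : V → V → Prop) [DecidableRel E] (hE : ∀ i, ¬ E i i) (i : V) :
    varVal E (indEst i i) -
        varVal E (fun f => (1 / (1 + (outDeg E i : ℝ))) *
          (1 + ∑ k ∈ inNbrs E i, indEst i k f))
      = 2 * (1 - fOmega E i i) / (1 + (outDeg E i : ℝ)) ^ 2 +
          (outDeg E i : ℝ) * ((outDeg E i : ℝ) - 1) * fOmega E i i /
            (1 + (outDeg E i : ℝ)) ^ 2 ∧
    0 ≤ 2 * (1 - fOmega E i i) / (1 + (outDeg E i : ℝ)) ^ 2 +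
          (outDeg E i : ℝ) * ((outDeg E i : ℝ) - 1) * fOmega E i i /
            (1 + (outDeg E i : ℝ)) ^ 2 := by
  have hq := one_add_outDeg_mul_fOmega_self hE i
  simp only [sum_indEst, varVal_mul_add, varVal_ite, varVal_indEst]
  set q := expVal E fun f => if rootOf f i ∈ inNbrs E i then 1 else 0
  set d : ℝ := (outDeg E i : ℝ)
  have hd : 0 ≤ d * (d - 1) := by
    rcases (outDeg E i).eq_zero_or_pos with h | h
    · simp [d, h]
    · exact mul_nonneg (Nat.cast_nonneg _) (sub_nonneg.2 (Nat.one_le_cast.2 h))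
  have hd1 : 1 + d ≠ 0 := by positivity
  refine ⟨?_, add_nonneg ?_ ?_⟩
  · rw [show q = (1 + d) * fOmega E i i - 1 by linarith]
    field_simp
    ring
  · exact div_nonneg (by linarith [fOmega_le_one (E := E) i i]) (by positivity)
  · exact div_nonneg (mul_nonneg hd (fOmega_nonneg i i)) (by positivity)
end
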